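/- arXiv:2111.03885 — 4 statements merged into one kernel-verified Lean document; each statement's English description precedes it below -/
import Mathlib

section
/- Swap lemma: let p_1, …, p_m ∈ [0,1], let Θ_1, …, Θ_m be independent Bernoulli random variables with P(Θ_i = 1) = p_i. Let δ ∈ {0,1}^m and suppose there are indices j, ℓ with p_j < p_ℓ, δ_j = 0, and δ_ℓ = 1. Define δ^new ∈ {0,1}^m by δ^new_j = 1, δ^new_ℓ = 0, and δ^new_i = δ_i for all other i. Then (a) Σ_i (1−p_i)δ^new_i ≥ Σ_i (1−p_i)δ_i, and (b) for every real t, P(Σ_i Θ_i δ^new_i > t) ≤ P(Σ_i Θ_i δ_i > t). -/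
/-!
Let `S` be the sum of the `Θᵢ` over the indices selected by `δ` other than `ℓ`. The old and the new
sums are `S + Θ_ℓ` and `S + Θ_j`, and `S` is independent of both `Θ_j` and `Θ_ℓ`. Conditioning on
the Bernoulli summand, `P(S + Θ > t) = P(S > t) + (P(S > t - 1) - P(S > t)) P(Θ = 1)`, which is
nondecreasing in `P(Θ = 1)` because the bracket is nonnegative.
-/

open MeasureTheory ProbabilityTheory Finset

namespace ENNReal

theorem mul_add_mul_one_sub_eq {a b q : ℝ≥0∞} (hba : b ≤ a) (hq : q ≤ 1) :
    a * q + b * (1 - q) = b + (a - b) * q := by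
  calc a * q + b * (1 - q) = (b + (a - b)) * q + b * (1 - q) := by rw [add_tsub_cancel_of_le hba]
    _ = b * (q + (1 - q)) + (a - b) * q := by ring
    _ = b + (a - b) * q := by rw [add_tsub_cancel_of_le hq, mul_one]

end ENNReal

namespace ProbabilityTheory

variable {Ω ι β : Type*} [MeasurableSpace Ω] {μ : Measure Ω}

theorem iIndepFun.indepFun_sum_comp_of_notMem [MeasurableSpace β] {Θ : ι → Ω → β}
    (hindep : iIndepFun Θ μ) (hΘ : ∀ i, Measurable (Θ i)) {φ : β → ℝ} (hφ : Measurable φ)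
    {s : Finset ι} {j : ι} (hj : j ∉ s) :
    IndepFun (fun ω => ∑ i ∈ s, φ (Θ i ω)) (Θ j) μ := by
  have hψ : Measurable fun x : ({j} : Finset ι) → β => x ⟨j, mem_singleton_self j⟩ :=
    measurable_pi_apply _
  have hpair := (hindep.indepFun_finset s {j} (disjoint_singleton_right.2 hj) hΘ).comp
    (φ := fun x => ∑ i : s, φ (x i)) (by fun_prop) hψ
  convert hpair using 1
  · ext ω
    exact (sum_coe_sort s fun i => φ (Θ i ω)).symm
  · rfl

theorem measure_add_ite_gt [IsProbabilityMeasure μ] {S : Ω → ℝ} {θ : Ω → Bool}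
    (hS : Measurable S) (hθ : Measurable θ) (hind : IndepFun S θ μ) (t : ℝ) :
    μ {ω | S ω + (if θ ω then 1 else 0) > t} =
      μ {ω | S ω > t} + (μ {ω | S ω > t - 1} - μ {ω | S ω > t}) * μ {ω | θ ω = true} := by
  have hsplit : {ω | S ω + (if θ ω then 1 else 0) > t} =
      (S ⁻¹' Set.Ioi (t - 1) ∩ θ ⁻¹' {true}) ∪ (S ⁻¹' Set.Ioi t ∩ θ ⁻¹' {false}) := by
    ext ω
    cases h : θ ω <;> simp [h, sub_lt_iff_lt_add]
  have hdisj : Disjoint (S ⁻¹' Set.Ioi (t - 1) ∩ θ ⁻¹' {true}) (S ⁻¹' Set.Ioi t ∩ θ ⁻¹' {false}) :=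
    (Set.disjoint_singleton.2 (by decide)).preimage θ |>.mono inf_le_right inf_le_right
  have hfalse : μ (θ ⁻¹' {false}) = 1 - μ {ω | θ ω = true} := by
    rw [← prob_compl_eq_one_sub (s := {ω | θ ω = true}) (hθ (measurableSet_singleton true))]
    congr 1
    ext ω
    simp
  rw [hsplit, measure_union hdisj ((hS measurableSet_Ioi).inter (hθ (measurableSet_singleton _))),
    hind.measure_inter_preimage_eq_mul _ _ measurableSet_Ioi (measurableSet_singleton _),
    hind.measure_inter_preimage_eq_mul _ _ measurableSet_Ioi (measurableSet_singleton _), hfalse]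
  exact ENNReal.mul_add_mul_one_sub_eq (measure_mono fun ω (h : t < S ω) => by
    show t - 1 < S ω; linarith) prob_le_one

theorem measure_add_ite_gt_le [IsProbabilityMeasure μ] {S : Ω → ℝ} {θ θ' : Ω → Bool}
    (hS : Measurable S) (hθ : Measurable θ) (hθ' : Measurable θ')
    (hind : IndepFun S θ μ) (hind' : IndepFun S θ' μ)
    (hle : μ {ω | θ ω = true} ≤ μ {ω | θ' ω = true}) (t : ℝ) :
    μ {ω | S ω + (if θ ω then 1 else 0) > t} ≤ μ {ω | S ω + (if θ' ω then 1 else 0) > t} := by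
  rw [measure_add_ite_gt hS hθ hind, measure_add_ite_gt hS hθ' hind']
  gcongr

end ProbabilityTheory

section Selection

variable {ι R : Type*} [Fintype ι] [NonAssocSemiring R]

theorem sum_mul_ite_eq_sum_filter (w : ι → R) (d : ι → Bool) :
    ∑ i, w i * (if d i then (1 : R) else 0) = ∑ i with d i, w i := by
  simp only [sum_filter, mul_ite, mul_one, mul_zero]

variable [DecidableEq ι]

theorem sum_mul_ite_eq_sum_erase_add (w : ι → R) {d : ι → Bool} {l : ι} (hl : d l = true) :
    ∑ i, w i * (if d i then (1 : R) else 0) = ∑ i ∈ ({i | d i} : Finset ι).erase l, w i + w l := by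
  rw [sum_mul_ite_eq_sum_filter, sum_erase_add _ _ (by simpa using hl)]

theorem sum_mul_ite_update_eq_sum_erase_add (w : ι → R) {d : ι → Bool} {j l : ι}
    (hj : d j = false) (hl : d l = true) :
    ∑ i, w i * (if Function.update (Function.update d j true) l false i then (1 : R) else 0) =
      ∑ i ∈ ({i | d i} : Finset ι).erase l, w i + w j := by
  have hjl : j ≠ l := by rintro rfl; simp_all
  have hsupp : ({i | Function.update (Function.update d j true) l false i} : Finset ι) =
      insert j (({i | d i} : Finset ι).erase l) := by
    ext i
    by_cases hil : i = l <;> by_cases hij : i = j <;> simp_all [Function.update_apply]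
  rw [sum_mul_ite_eq_sum_filter, hsupp, sum_insert (by simp [hj]), add_comm]

end Selection

theorem swap_lemma_general {Ω : Type*} [MeasureSpace Ω]
    [IsProbabilityMeasure (ℙ : Measure Ω)]
    (m : ℕ) (p : Fin m → ℝ)
    (Θ : Fin m → Ω → Bool) (hΘm : ∀ i, Measurable (Θ i))
    (hΘp : ∀ i, ℙ {ω | Θ i ω = true} = ENNReal.ofReal (p i))
    (hindep : iIndepFun Θ ℙ)
    (δ : Fin m → Bool) (j l : Fin m) (hpjl : p j < p l)
    (hδj : δ j = false) (hδl : δ l = true)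
    (δnew : Fin m → Bool)
    (hδnew : δnew = Function.update (Function.update δ j true) l false) :
    ((∑ i, (1 - p i) * (if δnew i then (1 : ℝ) else 0)) ≥
        ∑ i, (1 - p i) * (if δ i then (1 : ℝ) else 0)) ∧
    ∀ t : ℝ,
      ℙ {ω | (∑ i, (if Θ i ω then (1 : ℝ) else 0) * (if δnew i then (1 : ℝ) else 0)) > t}
        ≤ ℙ {ω | (∑ i, (if Θ i ω then (1 : ℝ) else 0) * (if δ i then (1 : ℝ) else 0)) > t} := by
  subst hδnew
  set T := ({i | δ i} : Finset (Fin m)).erase l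
  have hjT : j ∉ T := by simp [T, hδj]
  have hlT : l ∉ T := by simp [T]
  simp only [sum_mul_ite_update_eq_sum_erase_add _ hδj hδl, sum_mul_ite_eq_sum_erase_add _ hδl]
  refine ⟨by linarith, fun t => ?_⟩
  have hB : Measurable fun b : Bool => if b then (1 : ℝ) else 0 := measurable_from_top
  have hS : Measurable fun ω => ∑ i ∈ T, (if Θ i ω then (1 : ℝ) else 0) :=
    Finset.measurable_sum T fun i _ => hB.comp (hΘm i)
  exact measure_add_ite_gt_le hS (hΘm j) (hΘm l)
    (hindep.indepFun_sum_comp_of_notMem hΘm hB hjT) (hindep.indepFun_sum_comp_of_notMem hΘm hB hlT)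
    (by rw [hΘp, hΘp]; exact ENNReal.ofReal_le_ofReal hpjl.le) t

/-- **Swap lemma**: with `Θ₁, …, Θ_m` independent Bernoulli(pᵢ), if `δ` has `δⱼ = 0`,
`δ_ℓ = 1` and `pⱼ < p_ℓ`, then swapping (`δ^new_j = 1`, `δ^new_ℓ = 0`, equal elsewhere)
gives (a) `Σ (1−pᵢ)δ^newᵢ ≥ Σ (1−pᵢ)δᵢ`, and (b) for every real `t`,
`P(Σ Θᵢ δ^newᵢ > t) ≤ P(Σ Θᵢ δᵢ > t)`. -/
theorem swap_lemma {Ω : Type*} [MeasureSpace Ω]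
    [IsProbabilityMeasure (ℙ : Measure Ω)]
    (m : ℕ) (p : Fin m → ℝ) (hp : ∀ i, p i ∈ Set.Icc (0 : ℝ) 1)
    (Θ : Fin m → Ω → Bool) (hΘm : ∀ i, Measurable (Θ i))
    (hΘp : ∀ i, ℙ {ω | Θ i ω = true} = ENNReal.ofReal (p i))
    (hindep : iIndepFun Θ ℙ)
    (δ : Fin m → Bool) (j l : Fin m) (hpjl : p j < p l)
    (hδj : δ j = false) (hδl : δ l = true)
    (δnew : Fin m → Bool)
    (hδnew : δnew = Function.update (Function.update δ j true) l false) :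
    ((∑ i, (1 - p i) * (if δnew i then (1 : ℝ) else 0)) ≥
        ∑ i, (1 - p i) * (if δ i then (1 : ℝ) else 0)) ∧
    ∀ t : ℝ,
      ℙ {ω | (∑ i, (if Θ i ω then (1 : ℝ) else 0) * (if δnew i then (1 : ℝ) else 0)) > t}
        ≤ ℙ {ω | (∑ i, (if Θ i ω then (1 : ℝ) else 0) * (if δ i then (1 : ℝ) else 0)) > t} :=
  swap_lemma_general m p Θ hΘm hΘp hindep δ j l hpjl hδj hδl δnew hδnew
end

section
/- Randomization achieves exact level: let (Ω, ℱ, P) be a probability space, 𝒢 ⊆ ℱ a sub-σ-algebra, and A ⊆ B two events in ℱ. Let α ∈ [0,1] and suppose that almost surely P(A | 𝒢) ≤ α < P(B | 𝒢). Let U be a random variable uniformly distributed on [0,1] and independent of the σ-algebra generated by 𝒢 together with the indicators of A and B. Define the 𝒢-measurable weight W = (α − P(A | 𝒢)) / (P(B | 𝒢) − P(A | 𝒢)), and define the event C = A ∪ (B ∩ {U ≤ W}). Then P(C | 𝒢) = α almost surely, and consequently P(C) = α. -/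
/-!
Put `H = G ⊔ σ(A, B)`. Since `U` is uniform on `[0, 1]` and independent of `H`, while the weight
`W` is `H`-measurable with values in `[0, 1]`, Fubini gives `P(U ≤ W | H) = W`. As `A ⊆ B`,
`1_C = 1_A + 1_{B \ A} 1_{U ≤ W}`; pulling out `1_{B \ A}` under `H` and then `W` under `G`
(tower property) yields `P(C | G) = P(A | G) + W (P(B | G) - P(A | G))`, which is `α` by the
choice of `W`. Integrating gives `P(C) = α`.
-/

open MeasureTheory ProbabilityTheory

/-- The conditional probability `P(A | G)` of an event `A` given a sub-σ-algebra `G`,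
i.e. the conditional expectation of the indicator of `A` given `G`, on a space whose
ambient σ-algebra is `F`. -/
noncomputable def condProb {Ω : Type*} (F G : MeasurableSpace Ω)
    (P : @Measure Ω F) (A : Set Ω) : Ω → ℝ :=
  @MeasureTheory.condExp Ω ℝ G F _ _ P (A.indicator fun _ => (1 : ℝ))

open Set
open scoped ENNReal

local notation "𝟙" s:max => Set.indicator (M := ℝ) s 1

lemma indicator_union_inter_eq_add_mul {Ω : Type*} {A B E : Set Ω} (hAB : A ⊆ B) :
    𝟙 (A ∪ (B ∩ E)) = 𝟙 A + 𝟙 (B \ A) * 𝟙 E := by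
  ext ω
  by_cases hA : ω ∈ A
  · simp [hA, hAB hA]
  · by_cases hB : ω ∈ B <;> by_cases hE : ω ∈ E <;> simp [hA, hB, hE]

lemma volume_restrict_Icc_Iic {x : ℝ} (hx : x ∈ Icc (0 : ℝ) 1) :
    volume.restrict (Icc (0 : ℝ) 1) (Iic x) = ENNReal.ofReal x := by
  have : Iic x ∩ Icc 0 1 = Icc 0 x := by
    ext y
    simp only [mem_inter_iff, mem_Iic, mem_Icc]
    exact ⟨fun h => ⟨h.2.1, h.1⟩, fun h => ⟨h.2, h.1, h.2.trans hx.2⟩⟩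
  rw [Measure.restrict_apply measurableSet_Iic, this, Real.volume_Icc, sub_zero]

lemma sub_div_sub_mem_Icc {a b c : ℝ} (hac : a ≤ c) (hcb : c < b) :
    (c - a) / (b - a) ∈ Icc (0 : ℝ) 1 :=
  ⟨div_nonneg (sub_nonneg.2 hac) (by linarith), (div_le_one (by linarith)).2 (by linarith)⟩

lemma ProbabilityTheory.IndepFun.lintegral_comp_prodMk {Ω β γ : Type*} [MeasurableSpace Ω]
    [MeasurableSpace β] [MeasurableSpace γ] {P : Measure Ω} [IsFiniteMeasure P]
    {V : Ω → β} {U : Ω → γ} (hVU : IndepFun V U P)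
    (hV : Measurable V) (hU : Measurable U) {g : β × γ → ℝ≥0∞} (hg : Measurable g) :
    ∫⁻ ω, g (V ω, U ω) ∂P = ∫⁻ ω, ∫⁻ u, g (V ω, u) ∂(P.map U) ∂P := by
  rw [← lintegral_map hg (hV.prodMk hU),
    (indepFun_iff_map_prod_eq_prod_map_map hV.aemeasurable hU.aemeasurable).1 hVU,
    lintegral_prod _ hg.aemeasurable, lintegral_map hg.lintegral_prod_right' hV]

section
variable {Ω : Type*} {m : MeasurableSpace Ω} [mΩ : MeasurableSpace Ω] {P : Measure Ω}
  [IsFiniteMeasure P] {U W : Ω → ℝ}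

lemma measure_inter_setOf_le_of_indep_uniform (hm : m ≤ mΩ) (hU : Measurable U)
    (hUdist : P.map U = volume.restrict (Icc (0 : ℝ) 1))
    (hUindep : Indep (MeasurableSpace.comap U inferInstance) m P)
    (hW : Measurable[m] W) (hW01 : ∀ᵐ ω ∂P, W ω ∈ Icc (0 : ℝ) 1)
    {D : Set Ω} (hD : MeasurableSet[m] D) :
    P (D ∩ {ω | U ω ≤ W ω}) = ∫⁻ ω in D, ENNReal.ofReal (W ω) ∂P := by
  set V : Ω → ℝ × ℝ≥0∞ := fun ω => (W ω, D.indicator 1 ω)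
  have hV : Measurable[m] V := hW.prodMk (measurable_const.indicator hD)
  have hVU : IndepFun V U P := by
    rw [IndepFun_iff_Indep]
    exact indep_of_indep_of_le_left hUindep.symm hV.comap_le
  set g : (ℝ × ℝ≥0∞) × ℝ → ℝ≥0∞ := fun p => p.1.2 * (Iic p.1.1).indicator 1 p.2
  have hg : Measurable g := measurable_fst.snd.mul
    (measurable_one.indicator (measurableSet_le measurable_snd measurable_fst.fst))
  calc P (D ∩ {ω | U ω ≤ W ω}) = ∫⁻ ω, g (V ω, U ω) ∂P := by
        rw [← lintegral_indicator_one ((hm _ hD).inter (measurableSet_le hU (hW.mono hm le_rfl)))]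
        congr with ω
        by_cases hωD : ω ∈ D <;> by_cases hωU : U ω ≤ W ω <;> simp [g, V, hωD, hωU]
    _ = ∫⁻ ω, ∫⁻ u, g (V ω, u) ∂(P.map U) ∂P :=
        hVU.lintegral_comp_prodMk (hV.mono hm le_rfl) hU hg
    _ = ∫⁻ ω, D.indicator 1 ω * ENNReal.ofReal (W ω) ∂P := by
        refine lintegral_congr_ae ?_
        filter_upwards [hW01] with ω hω
        rw [lintegral_const_mul _ (measurable_one.indicator measurableSet_Iic),
          lintegral_indicator_one measurableSet_Iic, hUdist, volume_restrict_Icc_Iic hω]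
    _ = ∫⁻ ω in D, ENNReal.ofReal (W ω) ∂P := by
        rw [← lintegral_indicator (hm _ hD)]
        congr with ω
        by_cases hωD : ω ∈ D <;> simp [hωD]

lemma condExp_indicator_setOf_le_of_indep_uniform (hm : m ≤ mΩ) (hU : Measurable U)
    (hUdist : P.map U = volume.restrict (Icc (0 : ℝ) 1))
    (hUindep : Indep (MeasurableSpace.comap U inferInstance) m P)
    (hW : Measurable[m] W) (hW01 : ∀ᵐ ω ∂P, W ω ∈ Icc (0 : ℝ) 1) :
    P[𝟙 {ω | U ω ≤ W ω} | m] =ᵐ[P] W := by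
  have hE : MeasurableSet {ω | U ω ≤ W ω} := measurableSet_le hU (hW.mono hm le_rfl)
  have hWint : Integrable W P := Integrable.of_bound (hW.mono hm le_rfl).aestronglyMeasurable 1
    (hW01.mono fun _ hω => (Real.norm_of_nonneg hω.1).trans_le hω.2)
  refine (ae_eq_condExp_of_forall_setIntegral_eq hm ((integrable_const 1).indicator hE)
    (fun _ _ _ => hWint.integrableOn) (fun D hD _ => ?_) hW.aestronglyMeasurable).symm
  rw [integral_indicator_one hE, measureReal_restrict_apply hE,
    integral_eq_lintegral_of_nonneg_ae (ae_restrict_of_ae (hW01.mono fun _ h => h.1))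
      (hW.mono hm le_rfl).aestronglyMeasurable.restrict,
    ← measure_inter_setOf_le_of_indep_uniform hm hU hUdist hUindep hW hW01 hD,
    inter_comm, measureReal_def]

end

section
variable {Ω : Type*} {G H : MeasurableSpace Ω} [mΩ : MeasurableSpace Ω] {P : Measure Ω}
  {A B : Set Ω} {U W : Ω → ℝ}

lemma condExp_indicator_union_inter_setOf_le [IsFiniteMeasure P] (hGH : G ≤ H) (hHΩ : H ≤ mΩ)
    (hA : MeasurableSet A) (hB : MeasurableSet B) (hAB : A ⊆ B) (hBA : MeasurableSet[H] (B \ A))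
    (hU : Measurable U) (hUdist : P.map U = volume.restrict (Icc (0 : ℝ) 1))
    (hUindep : Indep (MeasurableSpace.comap U inferInstance) H P)
    (hW : StronglyMeasurable[G] W) (hW01 : ∀ᵐ ω ∂P, W ω ∈ Icc (0 : ℝ) 1) :
    P[𝟙 (A ∪ (B ∩ {ω | U ω ≤ W ω})) | G] =ᵐ[P]
      P[𝟙 A | G] + W * (P[𝟙 B | G] - P[𝟙 A | G]) := by
  set E := {ω | U ω ≤ W ω}
  have hE : MeasurableSet E := measurableSet_le hU (hW.measurable.mono (hGH.trans hHΩ) le_rfl)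
  have hint : ∀ {s : Set Ω}, MeasurableSet s → Integrable (𝟙 s) P :=
    fun hs => (integrable_const 1).indicator hs
  have hintBAE : Integrable (𝟙 (B \ A) * 𝟙 E) P := by
    rw [← inter_indicator_one]
    exact hint ((hB.diff hA).inter hE)
  have hW_bound : ∀ᵐ ω ∂P, ‖W ω‖ ≤ 1 :=
    hW01.mono fun _ hω => (Real.norm_of_nonneg hω.1).trans_le hω.2
  have hpull_H : P[𝟙 (B \ A) * 𝟙 E | H] =ᵐ[P] 𝟙 (B \ A) * W :=
    (condExp_mul_of_stronglyMeasurable_left (stronglyMeasurable_one.indicator hBA)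
      hintBAE (hint hE)).trans
      (condExp_indicator_setOf_le_of_indep_uniform hHΩ hU hUdist hUindep
        (hW.measurable.mono hGH le_rfl) hW01).mul_left
  have hpull_G : P[𝟙 (B \ A) * W | G] =ᵐ[P] W * (P[𝟙 B | G] - P[𝟙 A | G]) := by
    rw [mul_comm]
    refine (condExp_stronglyMeasurable_mul_of_bound (hGH.trans hHΩ) hW (hint (hB.diff hA)) 1
      hW_bound).trans ?_
    rw [indicator_sdiff hAB]
    exact (condExp_sub (hint hB) (hint hA) G).mul_left
  calc P[𝟙 (A ∪ (B ∩ E)) | G] = P[𝟙 A + 𝟙 (B \ A) * 𝟙 E | G] := by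
        rw [indicator_union_inter_eq_add_mul hAB]
    _ =ᵐ[P] P[𝟙 A | G] + P[𝟙 (B \ A) * 𝟙 E | G] := condExp_add (hint hA) hintBAE G
    _ =ᵐ[P] P[𝟙 A | G] + P[P[𝟙 (B \ A) * 𝟙 E | H] | G] :=
        (condExp_condExp_of_le hGH hHΩ).symm.add_left
    _ =ᵐ[P] P[𝟙 A | G] + P[𝟙 (B \ A) * W | G] := (condExp_congr_ae hpull_H).add_left
    _ =ᵐ[P] P[𝟙 A | G] + W * (P[𝟙 B | G] - P[𝟙 A | G]) := hpull_G.add_left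

lemma measure_eq_ofReal_of_condExp_indicator_eq [IsProbabilityMeasure P] (hG : G ≤ mΩ)
    {C : Set Ω} (hC : MeasurableSet C) {α : ℝ} (h : ∀ᵐ ω ∂P, P[𝟙 C | G] ω = α) :
    P C = ENNReal.ofReal α := by
  have hint := integral_condExp hG (μ := P) (f := 𝟙 C)
  rw [integral_congr_ae h, integral_const, integral_indicator_one hC] at hint
  simp only [probReal_univ, smul_eq_mul, one_mul] at hint
  rw [hint, ofReal_measureReal]

end

theorem randomization_exact_level_general {Ω : Type*} (F : MeasurableSpace Ω)
    (P : @Measure Ω F) (hP : IsProbabilityMeasure P)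
    (G : MeasurableSpace Ω) (hG : G ≤ F)
    (A B : Set Ω) (hA : MeasurableSet[F] A) (hB : MeasurableSet[F] B) (hAB : A ⊆ B)
    (α : ℝ)
    (hcond : ∀ᵐ ω ∂P, condProb F G P A ω ≤ α ∧ α < condProb F G P B ω)
    (U : Ω → ℝ) (hUm : @Measurable Ω ℝ F _ U)
    (hUdist : @Measure.map Ω ℝ F _ U P = volume.restrict (Set.Icc (0 : ℝ) 1))
    (hUindep : @Indep Ω (MeasurableSpace.comap U inferInstance)
        (G ⊔ MeasurableSpace.generateFrom {A, B}) F P)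
    (W : Ω → ℝ)
    (hW : W = fun ω => (α - condProb F G P A ω) /
        (condProb F G P B ω - condProb F G P A ω))
    (C : Set Ω) (hC : C = A ∪ (B ∩ {ω | U ω ≤ W ω})) :
    (∀ᵐ ω ∂P, condProb F G P C ω = α) ∧ P C = ENNReal.ofReal α := by
  -- `G` is a local instance too; make the ambient σ-algebra `F` the one found by instance search.
  let _ : MeasurableSpace Ω := F
  have hWG : StronglyMeasurable[G] W := hW ▸ (stronglyMeasurable_const.sub
    stronglyMeasurable_condExp).div (stronglyMeasurable_condExp.sub stronglyMeasurable_condExp)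
  have hW01 : ∀ᵐ ω ∂P, W ω ∈ Icc (0 : ℝ) 1 :=
    hcond.mono fun ω h => hW ▸ sub_div_sub_mem_Icc h.1 h.2
  have hBA : MeasurableSet[G ⊔ MeasurableSpace.generateFrom {A, B}] (B \ A) :=
    le_sup_right (a := G) _ ((MeasurableSpace.measurableSet_generateFrom (by simp)).diff
      (MeasurableSpace.measurableSet_generateFrom (by simp)))
  have hHF : G ⊔ MeasurableSpace.generateFrom {A, B} ≤ F :=
    sup_le hG (MeasurableSpace.generateFrom_le (by rintro s (rfl | rfl); exacts [hA, hB]))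
  have hlevel : ∀ᵐ ω ∂P,
      condProb F G P A ω + W ω * (condProb F G P B ω - condProb F G P A ω) = α :=
    hcond.mono fun ω h => by
      rw [hW, div_mul_cancel₀ _ (sub_pos.2 (h.1.trans_lt h.2)).ne']
      ring
  have hCG : ∀ᵐ ω ∂P, condProb F G P C ω = α := by
    filter_upwards [condExp_indicator_union_inter_setOf_le le_sup_left hHF hA hB hAB hBA
      hUm hUdist hUindep hWG hW01, hlevel]
      with ω hC_eq hlevel_ω
    exact hC ▸ hC_eq.trans hlevel_ω
  have hCF : MeasurableSet C :=
    hC ▸ hA.union (hB.inter (measurableSet_le hUm (hWG.measurable.mono hG le_rfl)))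
  exact ⟨hCG, measure_eq_ofReal_of_condExp_indicator_eq hG hCF hCG⟩

/-- **Randomization achieves exact level**: let `G ⊆ F` be a sub-σ-algebra, `A ⊆ B`
events, `α ∈ [0,1]` with `P(A | G) ≤ α < P(B | G)` a.s., and `U` uniform on `[0,1]`
independent of the σ-algebra generated by `G` together with the indicators of `A` and
`B`.  With the `G`-measurable weight `W = (α − P(A|G)) / (P(B|G) − P(A|G))` and the
event `C = A ∪ (B ∩ {U ≤ W})`, one has `P(C | G) = α` a.s., and consequently
`P(C) = α`. -/
theorem randomization_exact_level {Ω : Type*} (F : MeasurableSpace Ω)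
    (P : @Measure Ω F) (hP : IsProbabilityMeasure P)
    (G : MeasurableSpace Ω) (hG : G ≤ F)
    (A B : Set Ω) (hA : MeasurableSet[F] A) (hB : MeasurableSet[F] B) (hAB : A ⊆ B)
    (α : ℝ) (hα : α ∈ Set.Icc (0 : ℝ) 1)
    (hcond : ∀ᵐ ω ∂P, condProb F G P A ω ≤ α ∧ α < condProb F G P B ω)
    (U : Ω → ℝ) (hUm : @Measurable Ω ℝ F _ U)
    (hUdist : @Measure.map Ω ℝ F _ U P = volume.restrict (Set.Icc (0 : ℝ) 1))
    (hUindep : @Indep Ω (MeasurableSpace.comap U inferInstance)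
        (G ⊔ MeasurableSpace.generateFrom {A, B}) F P)
    (W : Ω → ℝ)
    (hW : W = fun ω => (α - condProb F G P A ω) /
        (condProb F G P B ω - condProb F G P A ω))
    (C : Set Ω) (hC : C = A ∪ (B ∩ {ω | U ω ≤ W ω})) :
    (∀ᵐ ω ∂P, condProb F G P C ω = α) ∧ P C = ENNReal.ofReal α :=
  randomization_exact_level_general F P hP G hG A B hA hB hAB α hcond U hUm hUdist hUindep W hW C hC
end

section
/- Geometric-mean binomial lower bound for the Poisson binomial tail: let p_1, …, p_n ∈ (0,1] and let X_1, …, X_n be independent Bernoulli random variables with P(X_i = 1) = p_i. Let Y be a binomial random variable with n trials and success probability (p_1 · p_2 ⋯ p_n)^{1/n} (the geometric mean of the p_i). Then Y is stochastically smaller than Σ_i X_i: for every real t, P(Y > t) ≤ P(Σ_i X_i > t). -/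
/-!
With the other success probabilities fixed, the tail `P(∑ Xᵢ > t)` depends on a pair
`(pₐ, p_b)` only through `pₐ p_b` and `pₐ + p_b`, and it increases with the sum. If
`p_b ≤ q ≤ pₐ` for the geometric mean `q`, replacing the pair by `(q, pₐ p_b / q)` keeps the
product and, as `(pₐ - q)(q - p_b) ≥ 0`, lowers the sum, hence the tail. Conditioning on the
coordinate now equal to `q` and inducting on the number of trials turns every coordinate
into `q`, i.e. the tail into the binomial one.
-/

open MeasureTheory ProbabilityTheory Finset

section

variable {ι : Type*} {s : Finset ι} {p : ι → ℝ} {q : ℝ}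

theorem exists_mem_apply_le_of_prod_eq_pow (hs : s.Nonempty) (hq : 0 < q)
    (h : ∏ i ∈ s, p i = q ^ #s) : ∃ b ∈ s, p b ≤ q := by
  by_contra! hlt
  have := prod_lt_prod_of_nonempty (fun _ _ => hq) hlt hs
  rw [prod_const] at this
  linarith

theorem exists_mem_le_apply_of_prod_eq_pow (hs : s.Nonempty) (hp : ∀ i ∈ s, 0 < p i)
    (h : ∏ i ∈ s, p i = q ^ #s) : ∃ a ∈ s, q ≤ p a := by
  by_contra! hlt
  have := prod_lt_prod_of_nonempty hp hlt hs
  rw [prod_const] at this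
  linarith

end

section Tail

variable {ι : Type*} [DecidableEq ι]

/-- `P(∑_{i ∈ s} Xᵢ > t)` for independent `Xᵢ ~ Bernoulli(p i)`, expanded over the set `A` of
successes. The threshold is real so that conditioning on one trial just shifts it by `1`. -/
noncomputable def poissonBinomialTail (p : ι → ℝ) (s : Finset ι) (t : ℝ) : ℝ :=
  ∑ A ∈ s.powerset, if t < #A then (∏ i ∈ A, p i) * ∏ i ∈ s \ A, (1 - p i) else 0

variable {p p' : ι → ℝ} {s : Finset ι} {a b : ι} {q : ℝ}

theorem poissonBinomialTail_congr (h : ∀ i ∈ s, p i = p' i) (t : ℝ) :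
    poissonBinomialTail p s t = poissonBinomialTail p' s t := by
  refine sum_congr rfl fun A hA => ?_
  have hA := mem_powerset.1 hA
  rw [prod_congr rfl fun i hi => h i (hA hi),
    prod_congr rfl fun i hi => congrArg (1 - ·) (h i (sdiff_subset hi))]

theorem poissonBinomialTail_insert (ha : a ∉ s) (t : ℝ) :
    poissonBinomialTail p (insert a s) t =
      p a * poissonBinomialTail p s (t - 1) + (1 - p a) * poissonBinomialTail p s t := by
  rw [poissonBinomialTail, sum_powerset_insert ha, add_comm, poissonBinomialTail,
    poissonBinomialTail, mul_sum, mul_sum]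
  congr 1
  · refine sum_congr rfl fun A hA => ?_
    have haA : a ∉ A := fun h => ha (mem_powerset.1 hA h)
    rw [card_insert_of_notMem haA, prod_insert haA, insert_sdiff_insert,
      sdiff_insert_of_notMem ha, Nat.cast_succ]
    simp only [← sub_lt_iff_lt_add]
    split_ifs <;> ring
  · refine sum_congr rfl fun A hA => ?_
    rw [insert_sdiff_of_notMem _ (fun h => ha (mem_powerset.1 hA h)),
      prod_insert (fun h => ha (mem_sdiff.1 h).1)]
    split_ifs <;> ring

theorem poissonBinomialTail_antitone (hp : ∀ i ∈ s, p i ∈ Set.Icc 0 1) :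
    Antitone (poissonBinomialTail p s) := by
  intro t t' htt'
  refine sum_le_sum fun A hA => ?_
  have hA := mem_powerset.1 hA
  have hterm : 0 ≤ (∏ i ∈ A, p i) * ∏ i ∈ s \ A, (1 - p i) :=
    mul_nonneg (prod_nonneg fun i hi => (hp i (hA hi)).1)
      (prod_nonneg fun i hi => sub_nonneg.2 (hp i (sdiff_subset hi)).2)
  split_ifs <;> first | exact le_rfl | exact hterm | linarith

theorem poissonBinomialTail_insert_insert (ha : a ∉ insert b s) (hb : b ∉ s) (t : ℝ) :
    poissonBinomialTail p (insert a (insert b s)) t =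
      p a * p b * (poissonBinomialTail p s (t - 2) - 2 * poissonBinomialTail p s (t - 1) +
          poissonBinomialTail p s t) +
        (p a + p b) * (poissonBinomialTail p s (t - 1) - poissonBinomialTail p s t) +
        poissonBinomialTail p s t := by
  rw [poissonBinomialTail_insert ha, poissonBinomialTail_insert hb,
    poissonBinomialTail_insert hb, sub_sub, show (1 : ℝ) + 1 = 2 by norm_num]
  ring

theorem poissonBinomialTail_le_of_mul_eq_of_add_le (ha : a ∉ insert b s) (hb : b ∉ s)
    (hp : ∀ i ∈ s, p i ∈ Set.Icc 0 1) (hp' : ∀ i ∈ s, p' i = p i)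
    (hmul : p' a * p' b = p a * p b) (hadd : p' a + p' b ≤ p a + p b) (t : ℝ) :
    poissonBinomialTail p' (insert a (insert b s)) t ≤
      poissonBinomialTail p (insert a (insert b s)) t := by
  have hanti : poissonBinomialTail p s t ≤ poissonBinomialTail p s (t - 1) :=
    poissonBinomialTail_antitone hp (by linarith)
  rw [poissonBinomialTail_insert_insert ha hb, poissonBinomialTail_insert_insert ha hb,
    poissonBinomialTail_congr hp', poissonBinomialTail_congr hp', poissonBinomialTail_congr hp',
    hmul]
  gcongr

theorem exists_apply_eq_poissonBinomialTail_le (hq : 0 < q) (ha : a ∈ s) (hb : b ∈ s)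
    (hab : a ≠ b) (hp : ∀ i ∈ s, p i ∈ Set.Ioc 0 1) (hbq : p b ≤ q) (hqa : q ≤ p a) :
    ∃ p' : ι → ℝ, p' a = q ∧ (∀ i ∈ s, p' i ∈ Set.Ioc 0 1) ∧
      ∏ i ∈ s, p' i = ∏ i ∈ s, p i ∧
      ∀ t, poissonBinomialTail p' s t ≤ poissonBinomialTail p s t := by
  set c := p a * p b / q
  have hc : q * c = p a * p b := mul_div_cancel₀ _ hq.ne'
  set r := (s.erase a).erase b
  have hbr : b ∉ r := notMem_erase b _
  have har : a ∉ insert b r := by simp [r, hab]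
  have hs : s = insert a (insert b r) := by
    rw [insert_erase (mem_erase.2 ⟨hab.symm, hb⟩), insert_erase ha]
  have hrs : ∀ i ∈ r, i ∈ s := fun i hi => mem_of_mem_erase (mem_of_mem_erase hi)
  set p' := Function.update (Function.update p a q) b c
  have hp'a : p' a = q := by simp [p', hab]
  have hp'b : p' b = c := by simp [p']
  have hp'r : ∀ i ∈ r, p' i = p i := fun i hi => by
    simp [p', ne_of_mem_of_not_mem hi hbr, ne_of_mem_of_not_mem (mem_insert_of_mem hi) har]
  refine ⟨p', hp'a, ?_, ?_, fun t => ?_⟩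
  · rw [hs]
    simp only [mem_insert, forall_eq_or_imp, hp'a, hp'b]
    refine ⟨⟨hq, hqa.trans (hp a ha).2⟩, ⟨div_pos (mul_pos (hp a ha).1 (hp b hb).1) hq, ?_⟩,
      fun i hi => hp'r i hi ▸ hp i (hrs i hi)⟩
    exact (div_le_one hq).2 <|
      (mul_le_mul (hp a ha).2 hbq (hp b hb).1.le zero_le_one).trans_eq (one_mul q)
  · rw [hs, prod_insert har, prod_insert hbr, prod_insert har, prod_insert hbr,
      prod_congr rfl hp'r, hp'a, hp'b, ← mul_assoc, ← mul_assoc, hc]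
  · rw [hs]
    refine poissonBinomialTail_le_of_mul_eq_of_add_le har hbr
      (fun i hi => Set.Ioc_subset_Icc_self (hp i (hrs i hi))) hp'r (by rw [hp'a, hp'b, hc]) ?_ t
    rw [hp'a, hp'b]
    refine le_of_mul_le_mul_left ?_ hq
    nlinarith [mul_nonneg (sub_nonneg.2 hqa) (sub_nonneg.2 hbq)]

theorem poissonBinomialTail_const (q : ℝ) (s : Finset ι) (t : ℝ) :
    poissonBinomialTail (fun _ => q) s t =
      ∑ j ∈ range (#s + 1),
        if t < j then ((#s).choose j : ℝ) * q ^ j * (1 - q) ^ (#s - j) else 0 := by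
  let f : ℕ → ℝ := fun m => if t < m then q ^ m * (1 - q) ^ (#s - m) else 0
  have h : ∀ A ∈ s.powerset,
      (if t < #A then (∏ _i ∈ A, q) * ∏ _i ∈ s \ A, (1 - q) else 0) = f #A := fun A hA => by
    rw [prod_const, prod_const, card_sdiff_of_subset (mem_powerset.1 hA)]
  refine (sum_congr rfl h).trans <| (sum_powerset_apply_card f).trans <|
    sum_congr rfl fun j _ => ?_
  simp only [f, nsmul_eq_mul]
  split_ifs <;> ring

theorem poissonBinomialTail_const_le_of_prod_eq_pow (hq : 0 < q)
    (hp : ∀ i ∈ s, p i ∈ Set.Ioc 0 1) (hprod : ∏ i ∈ s, p i = q ^ #s) (t : ℝ) :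
    poissonBinomialTail (fun _ => q) s t ≤ poissonBinomialTail p s t := by
  induction s using Finset.strongInduction generalizing p t with
  | H s ih =>
  rcases s.eq_empty_or_nonempty with rfl | hs
  · exact (poissonBinomialTail_congr (by simp) t).le
  obtain ⟨a, ha, hqa⟩ := exists_mem_le_apply_of_prod_eq_pow hs (fun i hi => (hp i hi).1) hprod
  obtain ⟨b, hb, hbq⟩ := exists_mem_apply_le_of_prod_eq_pow hs hq hprod
  suffices key : ∀ p' : ι → ℝ, p' a = q → (∀ i ∈ s, p' i ∈ Set.Ioc 0 1) →
      ∏ i ∈ s, p' i = q ^ #s → poissonBinomialTail (fun _ => q) s t ≤ poissonBinomialTail p' s t by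
    rcases hqa.eq_or_lt with hqa | hqa
    · exact key p hqa.symm hp hprod
    · obtain ⟨p', hp'a, hp', hprod', hle⟩ := exists_apply_eq_poissonBinomialTail_le hq ha hb
        (by rintro rfl; linarith) hp hbq hqa.le
      exact (key p' hp'a hp' (hprod'.trans hprod)).trans (hle t)
  intro p' hp'a hp' hprod'
  have hprod_erase : ∏ i ∈ s.erase a, p' i = q ^ #(s.erase a) := by
    have h := mul_prod_erase s p' ha
    rw [hp'a, hprod', ← card_erase_add_one ha, pow_succ'] at h
    exact mul_left_cancel₀ hq.ne' h
  have ih' := ih _ (erase_ssubset ha) (fun i hi => hp' i (mem_of_mem_erase hi)) hprod_erase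
  rw [← insert_erase ha, poissonBinomialTail_insert (notMem_erase a s),
    poissonBinomialTail_insert (notMem_erase a s), hp'a]
  have hq1 : q ≤ 1 := hp'a ▸ (hp' a ha).2
  gcongr <;> exact ih' _

end Tail

section SuccessSet

variable {Ω ι : Type*} [Fintype ι]

def successSet (X : ι → Ω → Bool) (ω : Ω) : Finset ι := {i | X i ω}

theorem successSet_preimage_singleton [DecidableEq ι] (X : ι → Ω → Bool) (A : Finset ι) :
    successSet X ⁻¹' {A} = ⋂ i ∈ univ, X i ⁻¹' {decide (i ∈ A)} := by
  ext ω
  simp only [successSet, Set.mem_preimage, Set.mem_singleton_iff, Set.mem_iInter,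
    Finset.ext_iff, mem_filter, mem_univ, true_and, forall_const]
  exact forall_congr' fun i => by cases X i ω <;> simp

end SuccessSet

section Measure

variable {Ω : Type*} [MeasurableSpace Ω] {μ : Measure Ω}

theorem measureReal_lt_natCast_le_sum [IsFiniteMeasure μ] {Y : Ω → ℕ} {n : ℕ}
    (hY : ∀ j, n < j → μ {ω | Y ω = j} = 0) (t : ℝ) :
    μ.real {ω | t < Y ω} ≤ ∑ j ∈ range (n + 1), if t < j then μ.real {ω | Y ω = j} else 0 := by
  have hnull : μ.real (⋃ j, {ω | Y ω = n + 1 + j}) = 0 :=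
    (measureReal_eq_zero_iff).2 (measure_iUnion_null fun j => hY _ (by omega))
  have hsub : {ω | t < Y ω} ⊆ (⋃ j ∈ {j ∈ range (n + 1) | t < (j : ℕ)}, {ω | Y ω = j}) ∪
      ⋃ j, {ω | Y ω = n + 1 + j} := by
    intro ω hω
    rcases le_or_gt (Y ω) n with h | h
    · exact Or.inl (Set.mem_biUnion (mem_filter.2 ⟨mem_range.2 (by omega), hω⟩) rfl)
    · exact Or.inr (Set.mem_iUnion.2 ⟨Y ω - (n + 1), by simp only [Set.mem_ofPred_eq]; omega⟩)
  calc μ.real {ω | t < Y ω}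
      ≤ μ.real (⋃ j ∈ {j ∈ range (n + 1) | t < (j : ℕ)}, {ω | Y ω = j}) +
          μ.real (⋃ j, {ω | Y ω = n + 1 + j}) :=
        (measureReal_mono hsub).trans (measureReal_union_le _ _)
    _ ≤ ∑ j ∈ {j ∈ range (n + 1) | t < (j : ℕ)}, μ.real {ω | Y ω = j} := by
        rw [hnull, add_zero]
        exact measureReal_biUnion_finset_le _ _
    _ = _ := sum_filter _ _

variable {ι : Type*} [Fintype ι] [DecidableEq ι]
variable [IsProbabilityMeasure μ] {X : ι → Ω → Bool}

theorem measureReal_successSet_preimage_singleton (hXm : ∀ i, Measurable (X i))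
    (hX : iIndepFun X μ) (A : Finset ι) :
    μ.real (successSet X ⁻¹' {A}) =
      (∏ i ∈ A, μ.real {ω | X i ω}) * ∏ i ∈ univ \ A, (1 - μ.real {ω | X i ω}) := by
  have hfalse : ∀ i, μ.real (X i ⁻¹' {false}) = 1 - μ.real (X i ⁻¹' {true}) := fun i => by
    rw [← probReal_compl_eq_one_sub (hXm i (measurableSet_singleton true))]
    congr 1
    ext ω
    simp
  rw [successSet_preimage_singleton, measureReal_def,
    hX.measure_inter_preimage_eq_mul _ fun _ _ => .of_discrete, ENNReal.toReal_prod,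
    ← prod_mul_prod_compl A, compl_eq_univ_sdiff]
  congr 1 <;> refine prod_congr rfl fun i hi => ?_
  · rw [decide_eq_true hi]
    rfl
  · rw [decide_eq_false (mem_sdiff.1 hi).2]
    exact hfalse i

theorem measureReal_lt_sum_boole_eq_poissonBinomialTail (hXm : ∀ i, Measurable (X i))
    (hX : iIndepFun X μ) (t : ℝ) :
    μ.real {ω | t < ∑ i, if X i ω then (1 : ℝ) else 0} =
      poissonBinomialTail (fun i => μ.real {ω | X i ω}) univ t := by
  have hset : {ω | t < ∑ i, if X i ω then (1 : ℝ) else 0} =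
      successSet X ⁻¹' ↑{A ∈ (univ : Finset ι).powerset | t < #A} := by
    ext ω
    simp [successSet, sum_boole]
  have hmeas : ∀ A ∈ {A ∈ (univ : Finset ι).powerset | t < #A},
      MeasurableSet (successSet X ⁻¹' {A}) :=
    fun A _ => successSet_preimage_singleton X A ▸
      Finset.measurableSet_biInter _ fun i _ => hXm i (measurableSet_singleton _)
  rw [hset, ← sum_measureReal_preimage_singleton _ hmeas, sum_filter]
  refine sum_congr rfl fun A _ => ?_
  rw [measureReal_successSet_preimage_singleton hXm hX]

end Measure

theorem binomial_geometric_mean_lower_bound_general {Ω : Type*} [MeasureSpace Ω]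
    [IsProbabilityMeasure (ℙ : Measure Ω)]
    (n : ℕ) (p : Fin n → ℝ) (hp : ∀ i, p i ∈ Set.Ioc (0 : ℝ) 1)
    (X : Fin n → Ω → Bool) (hXm : ∀ i, Measurable (X i))
    (hXp : ∀ i, ℙ {ω | X i ω = true} = ENNReal.ofReal (p i))
    (hindep : iIndepFun X ℙ)
    (q : ℝ) (hq : q = (∏ i, p i) ^ ((1 : ℝ) / n))
    (Y : Ω → ℕ)
    (hY : ∀ j : ℕ, ℙ {ω | Y ω = j}
        = ENNReal.ofReal ((n.choose j : ℝ) * q ^ j * (1 - q) ^ (n - j))) :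
    ∀ t : ℝ,
      ℙ {ω | (Y ω : ℝ) > t} ≤ ℙ {ω | (∑ i, if X i ω then (1 : ℝ) else 0) > t} := by
  intro t
  have hprod_pos : 0 < ∏ i, p i := prod_pos fun i _ => (hp i).1
  have hq_pos : 0 < q := hq ▸ Real.rpow_pos_of_pos hprod_pos _
  have hq_le : q ≤ 1 := hq ▸ Real.rpow_le_one hprod_pos.le
    (prod_le_one (fun i _ => (hp i).1.le) fun i _ => (hp i).2) (by positivity)
  have hq_pow : ∏ i, p i = q ^ #(univ : Finset (Fin n)) := by
    rcases n with _ | n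
    · simp
    · rw [card_univ, Fintype.card_fin, hq, one_div,
        Real.rpow_inv_natCast_pow hprod_pos.le n.succ_ne_zero]
  have hXp' : (fun i => Measure.real ℙ {ω | X i ω}) = p := funext fun i => by
    rw [measureReal_def, hXp, ENNReal.toReal_ofReal (hp i).1.le]
  rw [← ENNReal.toReal_le_toReal (measure_ne_top _ _) (measure_ne_top _ _)]
  calc Measure.real ℙ {ω | t < Y ω}
      ≤ ∑ j ∈ range (n + 1), if t < j then Measure.real ℙ {ω | Y ω = j} else 0 :=
        measureReal_lt_natCast_le_sum (fun j hj => by simp [hY, Nat.choose_eq_zero_of_lt hj]) t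
    _ = poissonBinomialTail (fun _ => q) univ t := by
        rw [poissonBinomialTail_const, card_univ, Fintype.card_fin]
        refine sum_congr rfl fun j _ => ?_
        have := sub_nonneg.2 hq_le
        rw [measureReal_def, hY, ENNReal.toReal_ofReal (by positivity)]
    _ ≤ poissonBinomialTail p univ t :=
        poissonBinomialTail_const_le_of_prod_eq_pow hq_pos (fun i _ => hp i) hq_pow t
    _ = Measure.real ℙ {ω | t < ∑ i, if X i ω then (1 : ℝ) else 0} := by
        rw [measureReal_lt_sum_boole_eq_poissonBinomialTail hXm hindep, hXp']

/-- **Geometric-mean binomial lower bound for the Poisson binomial tail**: with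
`p₁, …, p_n ∈ (0,1]`, `X₁, …, X_n` independent Bernoulli(pᵢ), and `Y` binomial with
`n` trials and success probability the geometric mean `(p₁⋯p_n)^{1/n}`, the variable
`Y` is stochastically smaller than `Σ Xᵢ`: for every real `t`,
`P(Y > t) ≤ P(Σ Xᵢ > t)`. -/
theorem binomial_geometric_mean_lower_bound {Ω : Type*} [MeasureSpace Ω]
    [IsProbabilityMeasure (ℙ : Measure Ω)]
    (n : ℕ) (hn : 0 < n) (p : Fin n → ℝ) (hp : ∀ i, p i ∈ Set.Ioc (0 : ℝ) 1)
    (X : Fin n → Ω → Bool) (hXm : ∀ i, Measurable (X i))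
    (hXp : ∀ i, ℙ {ω | X i ω = true} = ENNReal.ofReal (p i))
    (hindep : iIndepFun X ℙ)
    (q : ℝ) (hq : q = (∏ i, p i) ^ ((1 : ℝ) / n))
    (Y : Ω → ℕ) (hYm : Measurable Y)
    (hY : ∀ j : ℕ, ℙ {ω | Y ω = j}
        = ENNReal.ofReal ((n.choose j : ℝ) * q ^ j * (1 - q) ^ (n - j))) :
    ∀ t : ℝ,
      ℙ {ω | (Y ω : ℝ) > t} ≤ ℙ {ω | (∑ i, if X i ω then (1 : ℝ) else 0) > t} :=
  binomial_geometric_mean_lower_bound_general n p hp X hXm hXp hindep q hq Y hY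
end

section
/- Strict likelihood comparison for exchangeable Gaussian exponents: let m ≥ 2 and let A be an m×m real matrix with constant diagonal A_{ii} = a and constant off-diagonal entries A_{ij} = b for i ≠ j, with b < a. Let μ < 0 and z ∈ ℝ^m with z_1 > z_2, and let θ, θ' ∈ {0,1}^m satisfy θ_1 = 0, θ_2 = 1, θ'_1 = 1, θ'_2 = 0, and θ_i = θ'_i for all i ≥ 3. Then exp{(−1/2)(z−μθ)ᵀA(z−μθ)} > exp{(−1/2)(z−μθ')ᵀA(z−μθ')}. -/
/-!
The quadratic form of an exchangeable matrix is `(a - b) ‖x‖² + b (∑ xᵢ)²`. Moving the mean shift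
`μ` from coordinate 1 to coordinate 2 leaves `∑ xᵢ` unchanged and changes `‖x‖²` by `2μ(z₁ - z₂) < 0`,
so the exponent of the likelihood at `θ` is the larger one.
-/

open Matrix

theorem Matrix.eq_smul_one_add_const_of_diag_offDiag {ι : Type*} [DecidableEq ι]
    {A : Matrix ι ι ℝ} {a b : ℝ} (hdiag : ∀ i, A i i = a) (hoff : ∀ i j, i ≠ j → A i j = b) :
    A = (a - b) • (1 : Matrix ι ι ℝ) + of fun _ _ => b := by
  ext i j
  by_cases hij : i = j
  · subst hij; simp [hdiag]
  · simp [hoff i j hij, hij]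

theorem Matrix.dotProduct_mulVec_of_diag_offDiag {ι : Type*} [Fintype ι] [DecidableEq ι]
    {A : Matrix ι ι ℝ} {a b : ℝ} (hdiag : ∀ i, A i i = a) (hoff : ∀ i j, i ≠ j → A i j = b)
    (x : ι → ℝ) : x ⬝ᵥ A *ᵥ x = (a - b) * (x ⬝ᵥ x) + b * (∑ i, x i) ^ 2 := by
  have hconst : (of fun _ _ => b : Matrix ι ι ℝ) *ᵥ x = fun _ => b * ∑ i, x i := by
    ext i; simp [mulVec, dotProduct, Finset.mul_sum]
  rw [eq_smul_one_add_const_of_diag_offDiag hdiag hoff, add_mulVec, smul_mulVec, one_mulVec,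
    hconst, dotProduct_add, dotProduct_smul, smul_eq_mul]
  simp only [dotProduct, ← Finset.sum_mul]
  ring

theorem Fintype.sum_sub_sum_of_eq_off_pair {ι M : Type*} [Fintype ι] [AddCommGroup M]
    {f g : ι → M} {i j : ι} (hij : i ≠ j) (h : ∀ k, k ≠ i → k ≠ j → f k = g k) :
    ∑ k, f k - ∑ k, g k = (f i - g i) + (f j - g j) := by
  rw [← Finset.sum_sub_distrib]
  exact Fintype.sum_eq_add i j hij fun k hk => sub_eq_zero.2 (h k hk.1 hk.2)

/-- **Strict likelihood comparison for exchangeable Gaussian exponents**: for `A` with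
constant diagonal `a`, constant off-diagonal `b < a`, `μ < 0` and `z₁ > z₂`, with
`θ₁ = 0, θ₂ = 1, θ'₁ = 1, θ'₂ = 0` agreeing elsewhere,
`exp{(−1/2)(z−μθ)ᵀA(z−μθ)} > exp{(−1/2)(z−μθ')ᵀA(z−μθ')}`. -/
theorem gaussian_likelihood_comparison (m : ℕ) (hm : 2 ≤ m)
    (A : Matrix (Fin m) (Fin m) ℝ) (a b : ℝ)
    (hdiag : ∀ i, A i i = a) (hoff : ∀ i j, i ≠ j → A i j = b) (hba : b < a)
    (μ : ℝ) (hμ : μ < 0) (z : Fin m → ℝ)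
    (hz : z ⟨0, by omega⟩ > z ⟨1, by omega⟩)
    (θ θ' : Fin m → ℝ)
    (hθ1 : θ ⟨0, by omega⟩ = 0) (hθ2 : θ ⟨1, by omega⟩ = 1)
    (hθ'1 : θ' ⟨0, by omega⟩ = 1) (hθ'2 : θ' ⟨1, by omega⟩ = 0)
    (hagree : ∀ i : Fin m, 2 ≤ (i : ℕ) → θ i = θ' i) :
    Real.exp ((-(1 : ℝ) / 2) * dotProduct (z - μ • θ) (A.mulVec (z - μ • θ)))
      > Real.exp ((-(1 : ℝ) / 2) *
          dotProduct (z - μ • θ') (A.mulVec (z - μ • θ'))) := by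
  set u := z - μ • θ
  set v := z - μ • θ'
  have h01 : (⟨0, by omega⟩ : Fin m) ≠ ⟨1, by omega⟩ := by simp
  have hoffPair : ∀ k : Fin m, k ≠ ⟨0, by omega⟩ → k ≠ ⟨1, by omega⟩ → θ k = θ' k :=
    fun k h0 h1 => hagree k (by simp only [Ne, Fin.ext_iff] at h0 h1; omega)
  have hsum : ∑ k, u k - ∑ k, v k = 0 := by
    rw [Fintype.sum_sub_sum_of_eq_off_pair h01 fun k h0 h1 => by simp [u, v, hoffPair k h0 h1]]
    simp [u, v, hθ1, hθ2, hθ'1, hθ'2]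
  have hsq : u ⬝ᵥ u - v ⬝ᵥ v = 2 * μ * (z ⟨0, by omega⟩ - z ⟨1, by omega⟩) := by
    rw [dotProduct, dotProduct, Fintype.sum_sub_sum_of_eq_off_pair h01
      fun k h0 h1 => by simp [u, v, hoffPair k h0 h1]]
    simp only [u, v, Pi.sub_apply, Pi.smul_apply, smul_eq_mul, hθ1, hθ2, hθ'1, hθ'2]
    ring
  rw [gt_iff_lt, Real.exp_lt_exp, dotProduct_mulVec_of_diag_offDiag hdiag hoff,
    dotProduct_mulVec_of_diag_offDiag hdiag hoff, sub_eq_zero.1 hsum]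
  nlinarith [mul_pos (sub_pos.2 hba) (mul_pos (neg_pos.2 hμ) (sub_pos.2 hz))]
end
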